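/- arXiv:2312.02799 — 2 statements merged into one kernel-verified Lean document; each statement's English description precedes it below -/
import Mathlib

section
/- (Trivial LCM oscillators) Let f be an oscillator of period n and g an oscillator of period m in Conway's Game of Life. Then there exists a translation vector v ∈ ℤ × ℤ such that the configuration h defined by h c = (f c || g (c - v)) is an oscillator of period lcm(n, m); that is, two oscillators can be placed far enough apart that their disjoint union is an oscillator whose period is the least common multiple of their periods. -/
/-- The 8 neighbours of a cell: cells at Chebyshev distance 1. -/
noncomputable def neighbours (c : ℤ × ℤ) : Finset (ℤ × ℤ) :=
  (Finset.Icc (c.1 - 1) (c.1 + 1) ×ˢ Finset.Icc (c.2 - 1) (c.2 + 1)).erase c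

/-- Number of live neighbours of `c` in configuration `f`. -/
noncomputable def liveNeighbours (f : ℤ × ℤ → Bool) (c : ℤ × ℤ) : ℕ :=
  ((neighbours c).filter (fun d => f d = true)).card

/-- One step of Conway's Game of Life: a cell is alive iff it has exactly 3
live neighbours, or it is alive and has exactly 2 live neighbours. -/
noncomputable def lifeStep (f : ℤ × ℤ → Bool) : ℤ × ℤ → Bool := fun c =>
  (liveNeighbours f c == 3) || (f c && (liveNeighbours f c == 2))

/-- The support of a configuration: the set of live cells. -/
def support (f : ℤ × ℤ → Bool) : Set (ℤ × ℤ) := {c | f c = true}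

/-- An oscillator of period `p`: finite nonempty support, `L^[p] f = f`,
and `L^[q] f ≠ f` for all `0 < q < p`. -/
def IsOscillator (p : ℕ) (f : ℤ × ℤ → Bool) : Prop :=
  (support f).Finite ∧ (support f).Nonempty ∧
    lifeStep^[p] f = f ∧ ∀ q : ℕ, 0 < q → q < p → lifeStep^[q] f ≠ f

/-
Life is local and translation invariant. An oscillator runs through finitely many configurations,
each with finite support, so its whole orbit stays inside a bounded set of columns. Translating `g`
far to the right keeps the orbits of `f` and of the translate separated by two empty columns, across
which no cell sees; the union then evolves as the pair of its two halves, and it returns to itself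
after `q` steps exactly when both halves do. Its minimal period is therefore the lcm of the two
periods, just as for the product map `Prod.map lifeStep lifeStep`.
-/

open Function (IsPeriodicPt minimalPeriod iterate_succ_apply')

lemma mem_neighbours {c d : ℤ × ℤ} :
    d ∈ neighbours c ↔
      d ≠ c ∧ c.1 - 1 ≤ d.1 ∧ d.1 ≤ c.1 + 1 ∧ c.2 - 1 ≤ d.2 ∧ d.2 ≤ c.2 + 1 := by
  simp only [neighbours, Finset.mem_erase, Finset.mem_product, Finset.mem_Icc, and_assoc]

lemma mem_neighbours_comm {c d : ℤ × ℤ} : d ∈ neighbours c ↔ c ∈ neighbours d := by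
  simp only [mem_neighbours, ne_eq, Prod.ext_iff]; omega

lemma sub_mem_neighbours_sub {c d : ℤ × ℤ} (v : ℤ × ℤ) :
    d - v ∈ neighbours (c - v) ↔ d ∈ neighbours c := by
  simp only [mem_neighbours, ne_eq, Prod.ext_iff, Prod.fst_sub, Prod.snd_sub]; omega

lemma lifeStep_apply_congr {f f' : ℤ × ℤ → Bool} {c : ℤ × ℤ} (hc : f c = f' c)
    (hn : ∀ d ∈ neighbours c, f d = f' d) : lifeStep f c = lifeStep f' c := by
  have : liveNeighbours f c = liveNeighbours f' c := by
    rw [liveNeighbours, liveNeighbours, Finset.filter_congr fun d hd => by rw [hn d hd]]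
  simp only [lifeStep, this, hc]

lemma lifeStep_apply_eq_false {f : ℤ × ℤ → Bool} {c : ℤ × ℤ}
    (hn : ∀ d ∈ neighbours c, f d = false) : lifeStep f c = false := by
  have : liveNeighbours f c = 0 := by
    rw [liveNeighbours, Finset.card_eq_zero, Finset.filter_eq_empty_iff]
    simp_all
  simp [lifeStep, this]

lemma support_lifeStep_subset (f : ℤ × ℤ → Bool) :
    support (lifeStep f) ⊆ ⋃ d ∈ support f, (neighbours d : Set (ℤ × ℤ)) := by
  intro c hc
  obtain ⟨d, hd, hfd⟩ : ∃ d ∈ neighbours c, f d = true := by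
    by_contra! h
    have := lifeStep_apply_eq_false fun d hd => by simpa using h d hd
    exact Bool.false_ne_true (this.symm.trans hc)
  exact Set.mem_biUnion hfd (mem_neighbours_comm.1 hd)

lemma finite_support_iterate {f : ℤ × ℤ → Bool} (hf : (support f).Finite) (k : ℕ) :
    (support (lifeStep^[k] f)).Finite := by
  induction k with
  | zero => exact hf
  | succ k ih =>
    rw [iterate_succ_apply']
    exact (ih.biUnion fun d _ => (neighbours d).finite_toSet).subset (support_lifeStep_subset _)

lemma exists_bound_support_iterate {f : ℤ × ℤ → Bool} {n : ℕ} (hf : (support f).Finite)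
    (hper : IsPeriodicPt lifeStep n f) (hn : 0 < n) :
    ∃ R : ℤ, ∀ k c, R < |c.1| → lifeStep^[k] f c = false := by
  have horbit : (⋃ k, support (lifeStep^[k] f)).Finite := by
    refine ((Set.finite_Iio n).biUnion fun k _ => finite_support_iterate hf k).subset ?_
    simp only [Set.iUnion_subset_iff]
    intro k c hc
    rw [← hper.iterate_mod_apply] at hc
    exact Set.mem_biUnion (Set.mem_Iio.2 (Nat.mod_lt k hn)) hc
  obtain ⟨R, hR⟩ := (horbit.image fun c => |c.1|).bddAbove
  exact ⟨R, fun k c hc => Bool.eq_false_iff.2 fun h =>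
    hc.not_ge (hR ⟨c, Set.mem_iUnion.2 ⟨k, h⟩, rfl⟩)⟩

lemma lifeStep_or_of_separated {f g : ℤ × ℤ → Bool} {a : ℤ}
    (hf : ∀ c : ℤ × ℤ, a < c.1 → f c = false)
    (hg : ∀ c : ℤ × ℤ, c.1 < a + 3 → g c = false) :
    lifeStep (fun c => f c || g c) = fun c => lifeStep f c || lifeStep g c := by
  funext c
  have near_fst {d : ℤ × ℤ} (hd : d ∈ neighbours c) : c.1 - 1 ≤ d.1 ∧ d.1 ≤ c.1 + 1 :=
    ⟨(mem_neighbours.1 hd).2.1, (mem_neighbours.1 hd).2.2.1⟩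
  rcases le_or_gt c.1 (a + 1) with hc | hc
  · have hgc : lifeStep g c = false :=
      lifeStep_apply_eq_false fun d hd => hg d (by linarith [near_fst hd])
    rw [hgc, Bool.or_false]
    refine lifeStep_apply_congr (by simp [hg c (by omega)]) fun d hd => ?_
    simp [hg d (by linarith [near_fst hd])]
  · have hfc : lifeStep f c = false :=
      lifeStep_apply_eq_false fun d hd => hf d (by linarith [near_fst hd])
    rw [hfc, Bool.false_or]
    refine lifeStep_apply_congr (by simp [hf c (by omega)]) fun d hd => ?_
    simp [hf d (by linarith [near_fst hd])]

lemma iterate_lifeStep_or_of_separated {f g : ℤ × ℤ → Bool} {a : ℤ}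
    (hf : ∀ k (c : ℤ × ℤ), a < c.1 → lifeStep^[k] f c = false)
    (hg : ∀ k (c : ℤ × ℤ), c.1 < a + 3 → lifeStep^[k] g c = false) (k : ℕ) :
    lifeStep^[k] (fun c => f c || g c) = fun c => lifeStep^[k] f c || lifeStep^[k] g c := by
  induction k with
  | zero => rfl
  | succ k ih =>
    simp only [iterate_succ_apply', ih]
    exact lifeStep_or_of_separated (hf k) (hg k)

lemma or_eq_or_iff_of_separated {α : Type*} (S : Set α) {f f' g g' : α → Bool}
    (hf : ∀ x ∉ S, f x = false) (hf' : ∀ x ∉ S, f' x = false)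
    (hg : ∀ x ∈ S, g x = false) (hg' : ∀ x ∈ S, g' x = false) :
    ((fun x => f x || g x) = fun x => f' x || g' x) ↔ f = f' ∧ g = g' := by
  refine ⟨fun h => ⟨funext fun x => ?_, funext fun x => ?_⟩, fun ⟨rfl, rfl⟩ => rfl⟩ <;>
  · have := congrFun h x
    by_cases hx : x ∈ S <;> simp_all

lemma minimalPeriod_or_of_separated {f g : ℤ × ℤ → Bool} {a : ℤ}
    (hf : ∀ k (c : ℤ × ℤ), a < c.1 → lifeStep^[k] f c = false)
    (hg : ∀ k (c : ℤ × ℤ), c.1 < a + 3 → lifeStep^[k] g c = false) :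
    minimalPeriod lifeStep (fun c => f c || g c) =
      (minimalPeriod lifeStep f).lcm (minimalPeriod lifeStep g) := by
  refine Eq.trans ?_ (Function.minimalPeriod_prodMap lifeStep lifeStep (f, g))
  refine Function.minimalPeriod_eq_minimalPeriod_iff.2 fun q => ?_
  rw [Function.isPeriodicPt_prodMap]
  change lifeStep^[q] _ = _ ↔ lifeStep^[q] f = f ∧ lifeStep^[q] g = g
  rw [iterate_lifeStep_or_of_separated hf hg]
  exact or_eq_or_iff_of_separated {c : ℤ × ℤ | c.1 ≤ a} (fun c hc => hf q c (not_le.1 hc))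
    (fun c hc => hf 0 c (not_le.1 hc)) (fun c hc => hg q c (by simp at hc; omega))
    (fun c hc => hg 0 c (by simp at hc; omega))

lemma support_or (f g : ℤ × ℤ → Bool) :
    support (fun c => f c || g c) = support f ∪ support g := by
  ext c
  simp [support]

lemma translate_injective {G α : Type*} [AddCommGroup G] (v : G) :
    Function.Injective (translate v : (G → α) → G → α) := fun f g h => by
  simpa [translate_translate] using congrArg (translate (-v)) h

lemma liveNeighbours_translate (v : ℤ × ℤ) (f : ℤ × ℤ → Bool) (c : ℤ × ℤ) :
    liveNeighbours (translate v f) c = liveNeighbours f (c - v) := by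
  refine Finset.card_nbij' (· - v) (· + v) ?_ ?_ (fun _ _ => by simp) (fun _ _ => by simp)
  · intro d hd
    simp only [Finset.coe_filter, Set.mem_ofPred_eq] at hd ⊢
    exact ⟨(sub_mem_neighbours_sub v).2 hd.1, hd.2⟩
  · intro d hd
    simp only [Finset.coe_filter, Set.mem_ofPred_eq] at hd ⊢
    refine ⟨(sub_mem_neighbours_sub v).1 ?_, by simpa [translate] using hd.2⟩
    simpa using hd.1

lemma lifeStep_translate (v : ℤ × ℤ) (f : ℤ × ℤ → Bool) :
    lifeStep (translate v f) = translate v (lifeStep f) := by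
  funext c
  simp only [lifeStep, translate, liveNeighbours_translate]

lemma iterate_lifeStep_translate (v : ℤ × ℤ) (f : ℤ × ℤ → Bool) (k : ℕ) :
    lifeStep^[k] (translate v f) = translate v (lifeStep^[k] f) :=
  Function.Commute.iterate_left (fun f => lifeStep_translate v f) k f

lemma minimalPeriod_translate (v : ℤ × ℤ) (f : ℤ × ℤ → Bool) :
    minimalPeriod lifeStep (translate v f) = minimalPeriod lifeStep f :=
  Function.minimalPeriod_eq_minimalPeriod_iff.2 fun q => by
    simp only [IsPeriodicPt, Function.IsFixedPt, iterate_lifeStep_translate,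
      (translate_injective v).eq_iff]

lemma isOscillator_iff_minimalPeriod {p : ℕ} (hp : 0 < p) (f : ℤ × ℤ → Bool) :
    IsOscillator p f ↔
      (support f).Finite ∧ (support f).Nonempty ∧ minimalPeriod lifeStep f = p := by
  refine and_congr_right' (and_congr_right' ⟨fun ⟨hper, hmin⟩ => ?_, ?_⟩)
  · have hpos := Function.IsPeriodicPt.minimalPeriod_pos hp hper
    refine (Function.IsPeriodicPt.minimalPeriod_le hp hper).antisymm (not_lt.1 fun hlt => ?_)
    exact hmin _ hpos hlt (Function.isPeriodicPt_minimalPeriod lifeStep f)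
  · rintro rfl
    exact ⟨Function.isPeriodicPt_minimalPeriod lifeStep f, fun q hq hlt =>
      Function.not_isPeriodicPt_of_pos_of_lt_minimalPeriod hq.ne' hlt⟩

/-- Trivial LCM oscillators: two oscillators can be placed far enough apart that
their disjoint union is an oscillator of period `lcm n m`. -/
theorem lcm_oscillator (n m : ℕ) (f g : ℤ × ℤ → Bool)
    (hf : IsOscillator n f) (hg : IsOscillator m g) :
    ∃ v : ℤ × ℤ, IsOscillator (Nat.lcm n m) (fun c => f c || g (c - v)) := by
  have hsupport (v : ℤ × ℤ) : (support (fun c => f c || translate v g c)).Finite ∧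
      (support (fun c => f c || translate v g c)).Nonempty := by
    rw [support_or]
    exact ⟨hf.1.union (hg.1.preimage sub_left_injective.injOn),
      hf.2.1.mono Set.subset_union_left⟩
  rcases Nat.eq_zero_or_pos (n.lcm m) with hzero | hpos
  · exact ⟨0, (hsupport 0).1, (hsupport 0).2, by rw [hzero]; rfl, fun q _ hlt => by omega⟩
  obtain ⟨hn, hm⟩ : 0 < n ∧ 0 < m := by simpa [Nat.pos_iff_ne_zero, not_or] using hpos
  obtain ⟨R, hR⟩ := exists_bound_support_iterate hf.1 hf.2.2.1 hn
  obtain ⟨S, hS⟩ := exists_bound_support_iterate hg.1 hg.2.2.1 hm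
  set v : ℤ × ℤ := (R + |S| + 3, 0)
  have hleft (k : ℕ) (c : ℤ × ℤ) (hc : R < c.1) : lifeStep^[k] f c = false :=
    hR k c (hc.trans_le (le_abs_self _))
  have hright (k : ℕ) (c : ℤ × ℤ) (hc : c.1 < R + 3) :
      lifeStep^[k] (translate v g) c = false := by
    rw [iterate_lifeStep_translate]
    refine hS k (c - v) ?_
    rw [Prod.fst_sub, abs_of_neg (by linarith [abs_nonneg S])]
    linarith [le_abs_self S]
  refine ⟨v, (isOscillator_iff_minimalPeriod hpos _).2 ⟨(hsupport v).1, (hsupport v).2, ?_⟩⟩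
  calc minimalPeriod lifeStep (fun c => f c || translate v g c)
      = (minimalPeriod lifeStep f).lcm (minimalPeriod lifeStep (translate v g)) :=
        minimalPeriod_or_of_separated hleft hright
    _ = n.lcm m := by
        rw [minimalPeriod_translate, ((isOscillator_iff_minimalPeriod hn f).1 hf).2.2,
          ((isOscillator_iff_minimalPeriod hm g).1 hg).2.2]
end

section
/- (Existence of the glider) There exists a configuration f : ℤ × ℤ → Bool with finite nonempty support such that L^[4] f is the translate of f by the vector (1, 1); that is, there is a spaceship of period 4 that moves 1 cell diagonally every 4 generations. -/
/-!
The glider runs through four phases, and one more step turns the fourth into the first shifted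
by `(1, 1)`; each of these four steps is a finite check. A live cell of `lifeStep f` lies within
Chebyshev distance 1 of a live cell of `f`, so if `f` is supported in the box `[lo, hi]` (for the
product order on `ℤ × ℤ`, with `1 = (1, 1)`) then `lifeStep f` is supported in `[lo - 1, hi + 1]`,
and two configurations supported there are equal once they agree on that finite box.
-/

theorem neighbours_subset_Icc (c : ℤ × ℤ) : neighbours c ⊆ Finset.Icc (c - 1) (c + 1) := by
  intro d hd
  simp only [neighbours, Finset.mem_erase, Finset.mem_product, Finset.mem_Icc] at hd
  simp only [Finset.mem_Icc, Prod.le_def, Prod.fst_sub, Prod.snd_sub, Prod.fst_add, Prod.snd_add,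
    Prod.fst_one, Prod.snd_one]
  omega

theorem exists_live_of_lifeStep_eq_true {f : ℤ × ℤ → Bool} {c : ℤ × ℤ} (h : lifeStep f c = true) :
    ∃ d ∈ Finset.Icc (c - 1) (c + 1), f d = true := by
  by_contra! hdead
  have hc_mem : c ∈ Finset.Icc (c - 1) (c + 1) :=
    Finset.mem_Icc.2 ⟨sub_le_self c zero_le_one, le_add_of_nonneg_right zero_le_one⟩
  have hc : f c = false := by simpa using hdead c hc_mem
  have hnone : liveNeighbours f c = 0 := by
    rw [liveNeighbours, Finset.card_eq_zero, Finset.filter_eq_empty_iff]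
    exact fun d hd => by simpa using hdead d (neighbours_subset_Icc c hd)
  simp [lifeStep, hnone, hc] at h

theorem support_lifeStep_subset_Icc {f : ℤ × ℤ → Bool} {lo hi : ℤ × ℤ}
    (hf : support f ⊆ Set.Icc lo hi) : support (lifeStep f) ⊆ Set.Icc (lo - 1) (hi + 1) := by
  intro c hc
  obtain ⟨d, hd, hfd⟩ := exists_live_of_lifeStep_eq_true hc
  obtain ⟨hlo, hhi⟩ := hf hfd
  rw [Finset.mem_Icc] at hd
  exact ⟨sub_le_iff_le_add.2 (hlo.trans hd.2), sub_le_iff_le_add.1 (hd.1.trans hhi)⟩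

theorem eq_of_eqOn_of_support_subset {f g : ℤ × ℤ → Bool} {s : Set (ℤ × ℤ)}
    (hf : support f ⊆ s) (hg : support g ⊆ s) (h : Set.EqOn f g s) : f = g := by
  funext c
  by_cases hc : c ∈ s
  · exact h hc
  · rw [Bool.eq_false_iff.2 fun hfc => hc (hf hfc), Bool.eq_false_iff.2 fun hgc => hc (hg hgc)]

def ofFinset (s : Finset (ℤ × ℤ)) : ℤ × ℤ → Bool := fun c => decide (c ∈ s)

@[simp]
theorem support_ofFinset (s : Finset (ℤ × ℤ)) : support (ofFinset s) = s := by
  ext c; simp [support, ofFinset]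

theorem ofFinset_map_addRightEmbedding (s : Finset (ℤ × ℤ)) (v : ℤ × ℤ) :
    ofFinset (s.map (addRightEmbedding v)) = fun c => ofFinset s (c - v) := by
  funext c
  simp only [ofFinset, Finset.mem_map, addRightEmbedding_apply]
  exact decide_eq_decide.2 ⟨by rintro ⟨d, hd, rfl⟩; simpa, fun h => ⟨c - v, h, sub_add_cancel c v⟩⟩

theorem lifeStep_ofFinset_eq {s t : Finset (ℤ × ℤ)} {lo hi : ℤ × ℤ} (hs : s ⊆ Finset.Icc lo hi)
    (ht : t ⊆ Finset.Icc (lo - 1) (hi + 1))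
    (h : ∀ c ∈ Finset.Icc (lo - 1) (hi + 1), lifeStep (ofFinset s) c = ofFinset t c) :
    lifeStep (ofFinset s) = ofFinset t := by
  refine eq_of_eqOn_of_support_subset (s := Set.Icc (lo - 1) (hi + 1)) ?_ ?_ ?_
  · exact support_lifeStep_subset_Icc (by simpa [← Finset.coe_Icc] using hs)
  · simpa [← Finset.coe_Icc] using ht
  · exact fun c hc => h c (by simpa using hc)

def glider : Finset (ℤ × ℤ) := {(0, 0), (1, -2), (1, 0), (2, -1), (2, 0)}

def gliderPhase : ℕ → Finset (ℤ × ℤ)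
  | 0 => glider
  | 1 => {(0, -1), (1, 0), (1, 1), (2, -1), (2, 0)}
  | 2 => {(0, 0), (1, 1), (2, -1), (2, 0), (2, 1)}
  | 3 => {(1, -1), (1, 1), (2, 0), (2, 1), (3, 0)}
  | _ => glider.map (addRightEmbedding (1, 1))

theorem lifeStep_gliderPhase {n : ℕ} (hn : n < 4) :
    lifeStep (ofFinset (gliderPhase n)) = ofFinset (gliderPhase (n + 1)) := by
  interval_cases n <;>
    exact lifeStep_ofFinset_eq (lo := (0, -2)) (hi := (3, 1)) (by decide) (by decide) (by decide)

theorem iterate_lifeStep_glider {n : ℕ} (hn : n ≤ 4) :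
    lifeStep^[n] (ofFinset glider) = ofFinset (gliderPhase n) := by
  induction n with
  | zero => rfl
  | succ n ih =>
    rw [Function.iterate_succ_apply', ih (by omega), lifeStep_gliderPhase (by omega)]

/-- Existence of the glider: a finite nonempty pattern which after 4 generations
is the translate of itself by `(1, 1)`. -/
theorem glider_exists :
    ∃ f : ℤ × ℤ → Bool, (support f).Finite ∧ (support f).Nonempty ∧
      lifeStep^[4] f = fun c => f (c - (1, 1)) := by
  refine ⟨ofFinset glider, by simp, by simp [glider], ?_⟩
  rw [← ofFinset_map_addRightEmbedding]
  exact iterate_lifeStep_glider le_rfl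
end
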